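/- Let X be a set of ordinals which, with the subspace topology inherited from the order topology on the ordinals, is countably compact. Then X admits a full retractional skeleton (i.e., X is non-commutative Corson) if and only if every ordinal in X of uncountable cofinality is an isolated point of X. -/

import Mathlib

/-!
If `α ∈ X` has uncountable cofinality and is a limit of `X` from below, no sequence below `α`
converges to `α`, so a retraction `r s` of the skeleton whose (metrizable) range contains `α` is
constantly `α` on a whole interval `(δ, α] ∩ X`. Climbing alternately past these intervals and
up the skeleton gives an increasing sequence `s n` and points `y n ∈ range (r (s n))` increasing
to some `β < α` in `X`; then `β` lies in the range of `r (sup s)`, which is the limit of the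
`r (s n)`, all of which send `β` to `α`. Hence `β = α`, a contradiction.

Conversely, if every limit point of `X` has countable cofinality, every countable subset of `X`
extends to a countable closed set `C ⊆ X` meeting each initial segment of `X` and approaching
from below each of its points that `X` approaches from below. Then `x ↦ max (C ∩ [0, x])` is a
continuous retraction of `X` onto the countable compact, hence metrizable, set `C`, and these
retractions, indexed by such sets `C` under inclusion, form a full retractional skeleton; the
supremum of an increasing sequence of indices is the closure of their union.
-/

open Filter Topology Set

universe u

section Defs

/-- A space is countably compact if every countable open cover has a finite subcover. -/
def CountablyCompact (X : Type u) [TopologicalSpace X] : Prop :=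
  ∀ U : ℕ → Set X, (∀ n, IsOpen (U n)) → (⋃ n, U n) = Set.univ →
    ∃ t : Finset ℕ, (⋃ n ∈ t, U n) = Set.univ

variable {X : Type u} [TopologicalSpace X]

/-- A retractional skeleton on a topological space `X`. -/
structure IsRetractionalSkeleton {Γ : Type u} [PartialOrder Γ] (r : Γ → X → X) : Prop where
  nonempty : Nonempty Γ
  directed : ∀ s t : Γ, ∃ w, s ≤ w ∧ t ≤ w
  continuous : ∀ s, Continuous (r s)
  retraction : ∀ s, r s ∘ r s = r s
  compact_range : ∀ s, IsCompact (Set.range (r s))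
  metrizable_range : ∀ s, TopologicalSpace.MetrizableSpace (Set.range (r s))
  comp_eq_of_le : ∀ s t, s ≤ t → r t ∘ r s = r s ∧ r s ∘ r t = r s
  seq_sup : ∀ u : ℕ → Γ, Monotone u →
    ∃ t, IsLUB (Set.range u) t ∧
      ∀ x, Filter.Tendsto (fun n => r (u n) x) Filter.atTop (nhds (r t x))
  tendsto_id : ∀ x, Filter.Tendsto (fun s => r s x) Filter.atTop (nhds x)

/-- `X` admits a retractional skeleton (non-commutative Valdivia when `X` is compact). -/
def HasRetractionalSkeleton (X : Type u) [TopologicalSpace X] : Prop :=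
  ∃ (Γ : Type u) (_ : PartialOrder Γ) (r : Γ → X → X), IsRetractionalSkeleton r

/-- `X` admits a full retractional skeleton. -/
def HasFullRetractionalSkeleton (X : Type u) [TopologicalSpace X] : Prop :=
  ∃ (Γ : Type u) (_ : PartialOrder Γ) (r : Γ → X → X),
    IsRetractionalSkeleton r ∧ ∀ x : X, ∃ s, x ∈ Set.range (r s)

/-- A non-commutative Corson countably compact space. -/
def IsNCCorson (X : Type u) [TopologicalSpace X] : Prop :=
  CountablyCompact X ∧ HasFullRetractionalSkeleton X

/-- A weakly non-commutative Corson countably compact space: a countably compact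
continuous image of a non-commutative Corson countably compact space. -/
def IsWeaklyNCCorson (Y : Type u) [TopologicalSpace Y] : Prop :=
  CountablyCompact Y ∧
  ∃ (X : Type u) (_ : TopologicalSpace X) (_ : T2Space X) (_ : CompletelyRegularSpace X),
    IsNCCorson X ∧ ∃ f : X → Y, Continuous f ∧ Function.Surjective f

/-- A weakly non-commutative Valdivia compact space: a compact space with a dense
countably compact subspace which is weakly non-commutative Corson. -/
def IsWeaklyNCValdivia (K : Type u) [TopologicalSpace K] : Prop :=
  CompactSpace K ∧ ∃ D : Set K, Dense D ∧ IsWeaklyNCCorson ↥D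

end Defs

open Cardinal

theorem countablyCompact_iff_countablyCompactSpace {Y : Type u} [TopologicalSpace Y] :
    CountablyCompact Y ↔ CountablyCompactSpace Y := by
  simp only [← isCountablyCompact_univ_iff, isCountablyCompact_iff_countable_open_cover,
    univ_subset_iff]
  rfl

/-- If `sSup S ∉ K`, the open sets `Ioi (sSup S) ∪ Iio s`, `s ∈ S`, cover `K`, but finitely many of
them miss a large enough element of `S`. -/
theorem IsCountablyCompact.csSup_mem {α : Type*} [ConditionallyCompleteLinearOrder α]
    [TopologicalSpace α] [OrderTopology α] {K S : Set α} (hK : IsCountablyCompact K)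
    (hS : S.Countable) (hne : S.Nonempty) (hbdd : BddAbove S) (hSK : S ⊆ K) : sSup S ∈ K := by
  by_contra hsup
  have := hS.to_subtype
  have := hne.to_subtype
  have hcover : K ⊆ ⋃ s : S, Ioi (sSup S) ∪ Iio s.1 := fun x hx => by
    rcases lt_or_gt_of_ne (ne_of_mem_of_not_mem hx hsup) with hlt | hgt
    · obtain ⟨s, hs, hxs⟩ := exists_lt_of_lt_csSup hne hlt
      exact mem_iUnion.2 ⟨⟨s, hs⟩, Or.inr hxs⟩
    · exact mem_iUnion.2 ⟨⟨_, hne.some_mem⟩, Or.inl hgt⟩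
  obtain ⟨t, ht⟩ := hK.elim_finite_subcover (fun _ => isOpen_Ioi.union isOpen_Iio) hcover
  obtain ⟨M, hM⟩ := t.exists_le
  obtain ⟨s, hst, hMs⟩ := mem_iUnion₂.1 (ht (hSK M.2))
  exact hMs.elim (fun h => h.not_ge (le_csSup hbdd M.2)) fun h => h.not_ge (hM s hst)

theorem Set.Countable.exists_superset_forall_subset {α : Type*} (f : α → Set α)
    (hf : ∀ a, (f a).Countable) {D : Set α} (hD : D.Countable) :
    ∃ Y, D ⊆ Y ∧ Y.Countable ∧ (∀ a ∈ Y, f a ⊆ Y) ∧ Y ⊆ D ∪ ⋃ a, f a := by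
  let Z : ℕ → Set α := fun n => Nat.rec D (fun _ Z => Z ∪ ⋃ a ∈ Z, f a) n
  have hZ : ∀ n, (Z n).Countable ∧ Z n ⊆ D ∪ ⋃ a, f a := by
    intro n
    induction n with
    | zero => exact ⟨hD, subset_union_left⟩
    | succ n ih => exact ⟨ih.1.union (ih.1.biUnion fun a _ => hf a),
        union_subset ih.2 (iUnion₂_subset fun a _ => subset_union_right.trans' (subset_iUnion f a))⟩
  refine ⟨⋃ n, Z n, subset_iUnion Z 0, countable_iUnion fun n => (hZ n).1, fun a ha => ?_,
    iUnion_subset fun n => (hZ n).2⟩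
  obtain ⟨n, hn⟩ := mem_iUnion.1 ha
  exact (subset_biUnion_of_mem hn).trans (subset_union_right.trans (subset_iUnion Z (n + 1)))

namespace Ordinal

theorem isClopen_Iic (a : Ordinal) : IsClopen (Iic a) :=
  ⟨isClosed_Iic, Order.Iio_succ a ▸ isOpen_Iio⟩

theorem iSup_nat_lt_of_aleph0_lt_cof {f : ℕ → Ordinal.{u}} {a : Ordinal.{u}}
    (ha : ℵ₀ < a.cof) (hf : ∀ n, f n < a) : ⨆ n, f n < a :=
  lift_iSup_lt_of_lt_cof (by simpa using ha) hf

theorem not_tendsto_nhds_of_aleph0_lt_cof {f : ℕ → Ordinal.{u}} {a : Ordinal.{u}}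
    (ha : ℵ₀ < a.cof) (hf : ∀ n, f n < a) : ¬ Tendsto f atTop (𝓝 a) := fun h =>
  let ⟨n, hn⟩ := (h.eventually (Ioi_mem_nhds (iSup_nat_lt_of_aleph0_lt_cof ha hf))).exists
  hn.not_ge (le_ciSup bddAbove_of_small n)

theorem eventually_eq_of_aleph0_lt_cof {Y : Type*} [TopologicalSpace Y] [FrechetUrysohnSpace Y]
    {g : Y → Ordinal.{u}} {y : Y} (hg : ContinuousAt g y) (hcof : ℵ₀ < (g y).cof) :
    ∀ᶠ z in 𝓝 y, g z = g y := by
  have hle : ∀ᶠ z in 𝓝 y, g z ≤ g y :=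
    hg.eventually ((isClopen_Iic _).isOpen.mem_nhds (mem_Iic.2 le_rfl))
  have hge : ∀ᶠ z in 𝓝 y, g y ≤ g z := by
    by_contra h
    obtain ⟨u, hu, hlim⟩ := mem_closure_iff_seq_limit.1 <| mem_closure_iff_frequently.2 <|
      (not_eventually.1 h).mono fun z hz => (not_le.1 hz : g z < g y)
    exact not_tendsto_nhds_of_aleph0_lt_cof hcof hu (hg.tendsto.comp hlim)
  filter_upwards [hle, hge] with z using le_antisymm

/-- `T` picks a point of `S` above each element of a countable cofinal subset of `Iio c`. -/
theorem exists_countable_subset_mem_closure {S : Set Ordinal.{u}} {c : Ordinal.{u}}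
    (hc : c ∈ closure (S ∩ Iio c)) (hcof : c.cof ≤ ℵ₀) :
    ∃ T ⊆ S ∩ Iio c, T.Countable ∧ c ∈ closure T := by
  obtain ⟨s, hs, hcard⟩ := Order.exists_cof_eq (Iio c)
  have hsc : s.Countable := by
    rw [← le_aleph0_iff_set_countable, hcard, cof_Iio, ← lift_cof]
    exact lift_le_aleph0.2 hcof
  have hy : ∀ b : Iio c, ∃ y ∈ S ∩ Iio c, b.1 < y := fun b =>
    let ⟨y, hby, hy⟩ := mem_closure_iff_nhds.1 hc _ (Ioi_mem_nhds b.2)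
    ⟨y, hy, hby⟩
  choose y hyS hby using hy
  obtain ⟨x, -, hxc⟩ := closure_nonempty_iff.1 ⟨c, hc⟩
  obtain ⟨b₀, hb₀, -⟩ := hs ⟨x, hxc⟩
  refine ⟨y '' s, image_subset_iff.2 fun b _ => hyS b, hsc.image y,
    IsLUB.mem_closure ?_ ⟨_, b₀, hb₀, rfl⟩⟩
  refine ⟨forall_mem_image.2 fun b _ => (hyS b).2.le, fun a ha => not_lt.1 fun hac => ?_⟩
  obtain ⟨b, hbs, hab⟩ := hs ⟨a, hac⟩
  exact (ha ⟨b, hbs, rfl⟩).not_gt (lt_of_le_of_lt hab (hby b))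

theorem mem_closure_Iio_of_mem_closure {S : Set Ordinal} {c : Ordinal} (hc : c ∈ closure S)
    (hcS : c ∉ S) : c ∈ closure (S ∩ Iio c) := by
  have hsub : S ⊆ (S ∩ Iio c) ∪ Ioi c := fun x hx =>
    (lt_or_gt_of_ne (ne_of_mem_of_not_mem hx hcS)).imp (⟨hx, ·⟩) id
  have hclosed : IsClosed (Ioi c) := compl_Iic (a := c) ▸ (isClopen_Iic c).isOpen.isClosed_compl
  have := closure_mono hsub hc
  rw [closure_union, hclosed.closure_eq] at this
  exact this.resolve_right (lt_irrefl c)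

/-- A point `c` of `closure S` is the supremum of `S ∩ Iic c`, which is either `S` or `S ∩ Iio s`
with `s` the least element of `S` above `c`. -/
theorem countable_closure {S : Set Ordinal} (hS : S.Countable) : (closure S).Countable := by
  refine (((hS.image fun s => S ∩ Iio s).insert S).image sSup).mono fun c hc => ?_
  obtain ⟨-, hc⟩ := ((mem_closure_tfae c S).out 0 2).1 hc
  refine ⟨S ∩ Iic c, ?_, hc⟩
  by_cases hSc : S ⊆ Iic c
  · exact Or.inl (inter_eq_left.2 hSc)
  · have hne : (S \ Iic c).Nonempty := sdiff_nonempty.2 hSc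
    refine Or.inr ⟨sInf (S \ Iic c), (csInf_mem hne).1, ?_⟩
    ext y
    refine and_congr_right fun hy => ⟨fun hys => mem_Iic.2 <| not_lt.1 fun hcy =>
      (mem_Iio.1 hys).not_ge (csInf_le' (⟨hy, not_le.2 hcy⟩ : y ∈ S \ Iic c)),
      fun hyc => mem_Iio.2 (lt_of_le_of_lt hyc (not_le.1 (csInf_mem hne).2))⟩

theorem isOpen_singleton_subtype_iff {X : Set Ordinal} {α : Ordinal} (hα : α ∈ X) :
    IsOpen ({⟨α, hα⟩} : Set X) ↔ α ∉ closure (X ∩ Iio α) := by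
  have hopen : IsOpen ({⟨α, hα⟩} : Set X) ↔ ∀ᶠ z in 𝓝 α, z ∈ X → z = α := by
    simp only [isOpen_iff_mem_nhds, mem_singleton_iff, forall_eq]
    rw [← eventually_nhdsWithin_iff, ← eventually_nhds_subtype_iff X ⟨α, hα⟩ (· = α)]
    exact ⟨fun h => mem_of_superset h fun x hx => congrArg Subtype.val hx,
      fun h => mem_of_superset h fun x hx => Subtype.ext hx⟩
  have hle : ∀ᶠ z in 𝓝 α, z ≤ α := (isClopen_Iic α).isOpen.mem_nhds (mem_Iic.2 le_rfl)
  rw [hopen, mem_closure_iff_frequently, not_frequently]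
  refine ⟨fun h => h.mono fun z hz ⟨hzX, hzα⟩ => (mem_Iio.1 (hz hzX ▸ hzα)).false,
    fun h => (h.and hle).mono fun z hz hzX =>
      le_antisymm hz.2 (not_lt.1 fun hlt => hz.1 ⟨hzX, hlt⟩)⟩

/-- Since the sets `Iic a` are clopen, `y ↦ (g y ≤ g ·)` embeds `Y` into the metrizable
cube `Y → Bool`. -/
theorem metrizableSpace_of_continuous_injective {Y : Type*} [TopologicalSpace Y]
    [CompactSpace Y] [Countable Y] {g : Y → Ordinal} (hg : Continuous g)
    (hinj : Function.Injective g) :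
    TopologicalSpace.MetrizableSpace Y := by
  let φ : Y → Y → Bool := fun y w => (g ⁻¹' Iic (g w)).boolIndicator y
  have hφ : Continuous φ := continuous_pi fun w =>
    (continuous_boolIndicator_iff_isClopen _).2 ((isClopen_Iic _).preimage hg)
  have hφinj : Function.Injective φ := fun y w h => hinj <| le_antisymm
    (by simpa [φ, Set.boolIndicator] using congrFun h w)
    (by simpa [φ, Set.boolIndicator] using (congrFun h y).symm)
  exact (hφ.isClosedEmbedding hφinj).isEmbedding.metrizableSpace

end Ordinal

theorem IsCountablyCompact.closure_subset_of_countable {K S : Set Ordinal}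
    (hK : IsCountablyCompact K) (hS : S.Countable) (hSK : S ⊆ K) : closure S ⊆ K := fun c hc => by
  obtain ⟨hne, hc⟩ := ((Ordinal.mem_closure_tfae c S).out 0 2).1 hc
  exact hc ▸ hK.csSup_mem (hS.mono inter_subset_left) hne (bddAbove_Iic.mono inter_subset_right)
    (inter_subset_left.trans hSK)

namespace IsRetractionalSkeleton

variable {X Γ : Type u} [TopologicalSpace X] [PartialOrder Γ] {r : Γ → X → X}

theorem apply_of_mem_range (hr : IsRetractionalSkeleton r) {s : Γ} {x : X}
    (hx : x ∈ range (r s)) : r s x = x := by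
  obtain ⟨y, rfl⟩ := hx
  exact congrFun (hr.retraction s) y

theorem range_subset_range (hr : IsRetractionalSkeleton r) {s t : Γ} (hst : s ≤ t) :
    range (r s) ⊆ range (r t) := by
  rintro _ ⟨x, rfl⟩
  exact ⟨r s x, congrFun (hr.comp_eq_of_le s t hst).1 x⟩

theorem eventually_apply_eq_of_aleph0_lt_cof (hr : IsRetractionalSkeleton r) {g : X → Ordinal}
    (hg : Continuous g) {s : Γ} {x : X} (hx : x ∈ range (r s)) (hcof : ℵ₀ < (g x).cof) :
    ∀ᶠ y in 𝓝 x, g (r s y) = g x := by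
  have := hr.metrizable_range s
  have hK : ∀ᶠ z in 𝓝 (⟨x, hx⟩ : range (r s)), g z.1 = g x :=
    Ordinal.eventually_eq_of_aleph0_lt_cof (g := fun z : range (r s) => g z.1)
      (hg.comp continuous_subtype_val).continuousAt hcof
  have hfac : rangeFactorization (r s) x = ⟨x, hx⟩ := Subtype.ext (hr.apply_of_mem_range hx)
  exact ((hr.continuous s).rangeFactorization.tendsto' x _ hfac).eventually hK

/-- `b` lies in the closed range of `r t`, `t = sup s`, and `r t b` is the limit of the
`r (s n) b`. -/
theorem eq_of_tendsto [T2Space X] (hr : IsRetractionalSkeleton r) {s : ℕ → Γ}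
    (hs : Monotone s) {y : ℕ → X} (hy : ∀ n, y n ∈ range (r (s n))) {a b : X}
    (hyb : Tendsto y atTop (𝓝 b)) (hab : ∀ n, r (s n) b = a) : b = a := by
  obtain ⟨t, hlub, hlim⟩ := hr.seq_sup s hs
  have hbt : b ∈ range (r t) := (hr.compact_range t).isClosed.mem_of_tendsto hyb <|
    Eventually.of_forall fun n => hr.range_subset_range (hlub.1 ⟨n, rfl⟩) (hy n)
  rw [← hr.apply_of_mem_range hbt]
  exact tendsto_nhds_unique (hlim b) (by simp only [hab, tendsto_const_nhds])

end IsRetractionalSkeleton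

section Forward

variable {X : Set Ordinal.{u}} {Γ : Type (u + 1)} [PartialOrder Γ] {r : Γ → X → X}
  {α : Ordinal.{u}} (hα : α ∈ X)

/-- Continuity of `r s` at the point `α` of uncountable cofinality makes `r s` collapse a whole
interval `(δ, α]` of `X` onto `α`; fullness lets us climb past `δ` inside the skeleton. -/
theorem IsRetractionalSkeleton.exists_collapse_above (hr : IsRetractionalSkeleton r)
    (hfull : ∀ x, ∃ s, x ∈ range (r s)) (hlim : α ∈ closure (X ∩ Iio α))
    (hcof : ℵ₀ < α.cof) (s : Γ) (x : Ordinal) (hs : ⟨α, hα⟩ ∈ range (r s)) (hx : x < α) :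
    ∃ t : Γ, ∃ y : X, s ≤ t ∧ y ∈ range (r t) ∧ x < y.1 ∧ y.1 < α ∧
      ∀ z : X, y.1 ≤ z.1 → z.1 ≤ α → r s z = ⟨α, hα⟩ := by
  have hev := hr.eventually_apply_eq_of_aleph0_lt_cof continuous_subtype_val hs hcof
  rw [nhds_subtype, eventually_comap] at hev
  obtain ⟨δ, hδα, hδ⟩ := (SuccOrder.hasBasis_nhds_Ioc_of_exists_lt ⟨x, hx⟩).eventually_iff.1 hev
  obtain ⟨y, hxy, hyX, hyα⟩ := mem_closure_iff_nhds.1 hlim _ (Ioi_mem_nhds (max_lt hδα hx))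
  obtain ⟨sy, hsy⟩ := hfull ⟨y, hyX⟩
  obtain ⟨t, hst, hsyt⟩ := hr.directed s sy
  refine ⟨t, ⟨y, hyX⟩, hst, hr.range_subset_range hsyt hsy, (le_max_right _ _).trans_lt hxy,
    hyα, fun z hyz hzα =>
      Subtype.ext (hδ ⟨(le_max_left _ _).trans_lt (hxy.trans_le hyz), hzα⟩ z rfl)⟩

theorem IsRetractionalSkeleton.exists_seq_collapse (hr : IsRetractionalSkeleton r)
    (hfull : ∀ x, ∃ s, x ∈ range (r s)) (hlim : α ∈ closure (X ∩ Iio α))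
    (hcof : ℵ₀ < α.cof) :
    ∃ (s : ℕ → Γ) (y : ℕ → X), Monotone s ∧ Monotone (fun n => (y n).1) ∧
      (∀ n, y n ∈ range (r (s n))) ∧ (∀ n, (y n).1 < α) ∧
      ∀ n, ∀ z : X, (y (n + 1)).1 ≤ z.1 → z.1 ≤ α → r (s n) z = ⟨α, hα⟩ := by
  have : Nonempty X := ⟨⟨α, hα⟩⟩
  choose! T Y hT using hr.exists_collapse_above hα hfull hlim hcof
  obtain ⟨s₀, hs₀⟩ := hfull ⟨α, hα⟩
  have hα0 : 0 < α := by
    obtain ⟨x, -, hx⟩ := closure_nonempty_iff.1 ⟨α, hlim⟩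
    exact pos_of_gt hx
  let q : ℕ → Γ × Ordinal := fun n => (fun p => (T p.1 p.2, (Y p.1 p.2).1))^[n] (s₀, 0)
  have hqs : ∀ n, (q (n + 1)).1 = T (q n).1 (q n).2 := fun n => by
    simp only [q, Function.iterate_succ_apply']
  have hqy : ∀ n, (q (n + 1)).2 = (Y (q n).1 (q n).2).1 := fun n => by
    simp only [q, Function.iterate_succ_apply']
  have hI : ∀ n, ⟨α, hα⟩ ∈ range (r (q n).1) ∧ (q n).2 < α := by
    intro n
    induction n with
    | zero => exact ⟨hs₀, hα0⟩
    | succ n ih =>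
      obtain ⟨hle, -, -, hyα, -⟩ := hT _ _ ih.1 ih.2
      rw [hqs, hqy]
      exact ⟨hr.range_subset_range hle ih.1, hyα⟩
  have hT' := fun n => hT _ _ (hI n).1 (hI n).2
  exact ⟨fun n => T (q n).1 (q n).2, fun n => Y (q n).1 (q n).2,
    monotone_nat_of_le_succ fun n => (hqs n).symm.le.trans (hT' (n + 1)).1,
    monotone_nat_of_le_succ fun n => (hqy n).symm.le.trans (hT' (n + 1)).2.2.1.le,
    fun n => (hT' n).2.1, fun n => (hT' n).2.2.2.1,
    fun n z hyz hzα =>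
      (congrArg (r · z) (hqs n)).symm.trans ((hT' (n + 1)).2.2.2.2 z hyz hzα)⟩

end Forward

theorem notMem_closure_Iio_of_hasFullRetractionalSkeleton {X : Set Ordinal.{u}}
    (hX : IsCountablyCompact X) (h : HasFullRetractionalSkeleton X) {α : Ordinal.{u}}
    (hα : α ∈ X) (hcof : ℵ₀ < α.cof) : α ∉ closure (X ∩ Iio α) := by
  intro hlim
  obtain ⟨Γ, _, r, hr, hfull⟩ := h
  obtain ⟨s, y, hs, hy, hyr, hyα, hrA⟩ := hr.exists_seq_collapse hα hfull hlim hcof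
  have hbdd : BddAbove (range fun n => (y n).1) := Ordinal.bddAbove_of_small
  have hβα : ⨆ n, (y n).1 < α := Ordinal.iSup_nat_lt_of_aleph0_lt_cof hcof hyα
  have hβX : ⨆ n, (y n).1 ∈ X := hX.csSup_mem (countable_range _) (range_nonempty _) hbdd
    (range_subset_iff.2 fun n => (y n).2)
  have hyβ : Tendsto y atTop (𝓝 ⟨_, hβX⟩) :=
    IsInducing.subtypeVal.tendsto_nhds_iff.2 (tendsto_atTop_ciSup hy hbdd)
  have hβ := hr.eq_of_tendsto hs hyr hyβ fun n => hrA n _ (le_ciSup hbdd (n + 1)) hβα.le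
  exact hβα.ne (congrArg Subtype.val hβ)

/-- The (closed) sets of this kind are the ranges of the retractions making up the skeleton in the
converse direction. -/
structure IsSkeletonSet (X C : Set Ordinal) : Prop where
  subset : C ⊆ X
  countable : C.Countable
  exists_le : ∀ x ∈ X, ∃ c ∈ C, c ≤ x
  mem_closure_Iio : ∀ c ∈ C, c ∈ closure (X ∩ Iio c) → c ∈ closure (C ∩ Iio c)

namespace IsSkeletonSet

variable {X C D : Set Ordinal.{u}}

protected theorem closure (hX : IsCountablyCompact X) (hC : IsSkeletonSet X C) :
    IsSkeletonSet X (closure C) where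
  subset := hX.closure_subset_of_countable hC.countable hC.subset
  countable := Ordinal.countable_closure hC.countable
  exists_le x hx := (hC.exists_le x hx).imp fun _ hc => ⟨subset_closure hc.1, hc.2⟩
  mem_closure_Iio c hc hlim := closure_mono (inter_subset_inter_left _ subset_closure) <| by
    by_cases hcC : c ∈ C
    · exact hC.mem_closure_Iio c hcC hlim
    · exact Ordinal.mem_closure_Iio_of_mem_closure hc hcC

protected theorem iUnion {ι : Type*} [Countable ι] [Nonempty ι] {C : ι → Set Ordinal.{u}}
    (hC : ∀ i, IsSkeletonSet X (C i)) : IsSkeletonSet X (⋃ i, C i) where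
  subset := iUnion_subset fun i => (hC i).subset
  countable := countable_iUnion fun i => (hC i).countable
  exists_le x hx := ((hC (Classical.arbitrary ι)).exists_le x hx).imp fun _ hc =>
    ⟨mem_iUnion_of_mem _ hc.1, hc.2⟩
  mem_closure_Iio c hc hlim :=
    let ⟨i, hi⟩ := mem_iUnion.1 hc
    closure_mono (inter_subset_inter_left _ (subset_iUnion C i))
      ((hC i).mem_closure_Iio c hi hlim)

/-- Close `D ∪ {min X}` under a choice of countable sets `T c ⊆ X ∩ Iio c` approaching the limit
points `c` of `X`, then take the closure. -/
theorem exists_superset (hX : IsCountablyCompact X)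
    (hcof : ∀ c ∈ X, c ∈ closure (X ∩ Iio c) → c.cof ≤ ℵ₀) {D : Set Ordinal}
    (hD : D.Countable) (hDX : D ⊆ X) : ∃ C, IsSkeletonSet X C ∧ IsClosed C ∧ D ⊆ C := by
  have hT : ∀ c, ∃ T ⊆ X ∩ Iio c, T.Countable ∧
      (c ∈ X → c ∈ closure (X ∩ Iio c) → c ∈ closure T) := fun c => by
    by_cases hc : c ∈ X ∧ c ∈ closure (X ∩ Iio c)
    · obtain ⟨T, hT, hTc, hcT⟩ :=
        Ordinal.exists_countable_subset_mem_closure hc.2 (hcof c hc.1 hc.2)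
      exact ⟨T, hT, hTc, fun _ _ => hcT⟩
    · exact ⟨∅, empty_subset _, countable_empty, fun h1 h2 => (hc ⟨h1, h2⟩).elim⟩
  choose T hTX hTc hcT using hT
  have hD' : (D ∪ X ∩ {sInf X}).Countable :=
    hD.union ((countable_singleton (sInf X)).mono inter_subset_right)
  obtain ⟨Y, hDY, hYc, hTY, hY⟩ := hD'.exists_superset_forall_subset T hTc
  have hYX : Y ⊆ X := hY.trans <| union_subset (union_subset hDX inter_subset_left) <|
    iUnion_subset fun c => (hTX c).trans inter_subset_left
  have hYsk : IsSkeletonSet X Y :=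
    { subset := hYX
      countable := hYc
      exists_le := fun x hx => ⟨sInf X, hDY (Or.inr ⟨csInf_mem ⟨x, hx⟩, rfl⟩), csInf_le' hx⟩
      mem_closure_Iio := fun c hc hlim => closure_mono
        (subset_inter (hTY c hc) ((hTX c).trans inter_subset_right)) (hcT c (hYX hc) hlim) }
  exact ⟨closure Y, hYsk.closure hX, isClosed_closure,
    (subset_union_left.trans hDY).trans subset_closure⟩

theorem isGreatest_csSup_inter_Iic (hC : IsSkeletonSet X C) (hCc : IsClosed C) (x : X) :
    IsGreatest (C ∩ Iic x.1) (sSup (C ∩ Iic x.1)) := by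
  have hbdd : BddAbove (C ∩ Iic x.1) := bddAbove_Iic.mono inter_subset_right
  obtain ⟨c, hc, hcx⟩ := hC.exists_le x.1 x.2
  exact ⟨(hCc.inter isClosed_Iic).csSup_mem ⟨c, hc, hcx⟩ hbdd, fun _ hc => le_csSup hbdd hc⟩

noncomputable def retraction (hC : IsSkeletonSet X C) (hCc : IsClosed C) (x : X) : X :=
  ⟨sSup (C ∩ Iic x.1), hC.subset (hC.isGreatest_csSup_inter_Iic hCc x).1.1⟩

/-- Either `X` approaches `x` from below, and then so does `C`, or `X` has no points just
below `x`. -/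
theorem exists_lt_eventually_le (hC : IsSkeletonSet X C) {x : X} (hxC : x.1 ∈ C) {a : Ordinal}
    (ha : a < x.1) :
    ∃ c ∈ C, a < c ∧ ∀ᶠ y : X in 𝓝 x, c ≤ y.1 := by
  have hval := continuous_subtype_val.tendsto x
  by_cases hlim : x.1 ∈ closure (X ∩ Iio x.1)
  · obtain ⟨c, hac, hcC, hcx⟩ :=
      mem_closure_iff_nhds.1 (hC.mem_closure_Iio x.1 hxC hlim) _ (Ioi_mem_nhds ha)
    exact ⟨c, hcC, hac, (hval.eventually (Ioi_mem_nhds hcx)).mono fun y hy => le_of_lt hy⟩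
  · rw [mem_closure_iff_frequently, not_frequently] at hlim
    exact ⟨x.1, hxC, ha, (hval.eventually hlim).mono fun y hy =>
      not_lt.1 fun h => hy ⟨y.2, mem_Iio.2 h⟩⟩

section Retraction

variable (hC : IsSkeletonSet X C) (hCc : IsClosed C)

theorem isGreatest_retraction (x : X) : IsGreatest (C ∩ Iic x.1) (hC.retraction hCc x).1 :=
  hC.isGreatest_csSup_inter_Iic hCc x

theorem retraction_eq_self (x : X) (hx : x.1 ∈ C) : hC.retraction hCc x = x :=
  Subtype.ext <|
    (hC.isGreatest_retraction hCc x).unique ⟨⟨hx, mem_Iic.2 le_rfl⟩, fun _ hc => hc.2⟩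

theorem range_retraction : range (hC.retraction hCc) = Subtype.val ⁻¹' C := by
  refine Subset.antisymm (range_subset_iff.2 fun x => (hC.isGreatest_retraction hCc x).1.1) ?_
  exact fun x hx => ⟨x, hC.retraction_eq_self hCc x hx⟩

theorem retraction_retraction_of_subset (hD : IsSkeletonSet X D) (hDc : IsClosed D) (hCD : C ⊆ D)
    (x : X) : hC.retraction hCc (hD.retraction hDc x) = hC.retraction hCc x := by
  obtain ⟨⟨hmC, hmx⟩, hm⟩ := hC.isGreatest_retraction hCc x
  obtain ⟨⟨-, hmD⟩, hDx⟩ := hD.isGreatest_retraction hDc x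
  refine Subtype.ext <| (hC.isGreatest_retraction hCc _).unique ⟨⟨hmC, hDx ⟨hCD hmC, hmx⟩⟩, ?_⟩
  exact fun c hc => hm ⟨hc.1, mem_Iic.2 ((mem_Iic.1 hc.2).trans hmD)⟩

theorem continuous_retraction : Continuous (hC.retraction hCc) := by
  refine continuous_iff_continuousAt.2 fun x => ?_
  rw [ContinuousAt, IsInducing.subtypeVal.tendsto_nhds_iff]
  have hval := continuous_subtype_val.tendsto x
  obtain ⟨⟨hmC, hmx⟩, hm⟩ := hC.isGreatest_retraction hCc x
  rcases (mem_Iic.1 hmx).lt_or_eq with hlt | heq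
  · -- `x ∉ C`: the retraction is constant on `(r x, x]`
    refine tendsto_const_nhds.congr' ?_
    filter_upwards [hval.eventually (Ioi_mem_nhds hlt),
      hval.eventually ((Ordinal.isClopen_Iic x.1).isOpen.mem_nhds (mem_Iic.2 le_rfl))] with y hy hyx
    exact ((hC.isGreatest_retraction hCc y).unique
      ⟨⟨hmC, mem_Iic.2 hy.le⟩, fun c hc => hm ⟨hc.1, mem_Iic.2 ((mem_Iic.1 hc.2).trans hyx)⟩⟩).symm
  · rw [heq]
    refine tendsto_order.2 ⟨fun a ha => ?_, fun a ha => ?_⟩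
    · obtain ⟨c, hcC, hac, hc⟩ := hC.exists_lt_eventually_le (heq ▸ hmC) ha
      filter_upwards [hc] with y hy
      exact hac.trans_le ((hC.isGreatest_retraction hCc y).2 ⟨hcC, mem_Iic.2 hy⟩)
    · filter_upwards [hval.eventually (Iio_mem_nhds ha)] with y hy
      exact (mem_Iic.1 (hC.isGreatest_retraction hCc y).1.2).trans_lt hy

theorem isCompact_range_retraction : IsCompact (range (hC.retraction hCc)) := by
  rw [hC.range_retraction hCc, IsEmbedding.subtypeVal.isCompact_iff, Subtype.image_preimage_coe,
    inter_eq_right.2 hC.subset]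
  have := hC.countable.to_subtype
  exact (isCompact_Icc (a := 0) (b := sSup C)).of_isClosed_subset hCc fun c hc =>
    ⟨zero_le, le_csSup Ordinal.bddAbove_of_small hc⟩

theorem metrizableSpace_range_retraction :
    TopologicalSpace.MetrizableSpace (range (hC.retraction hCc)) := by
  have := isCompact_iff_compactSpace.1 (hC.isCompact_range_retraction hCc)
  have : Countable (range (hC.retraction hCc)) := by
    rw [hC.range_retraction hCc]
    exact (hC.countable.preimage Subtype.val_injective).to_subtype
  exact Ordinal.metrizableSpace_of_continuous_injective
    (continuous_subtype_val.comp continuous_subtype_val)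
    (Subtype.val_injective.comp Subtype.val_injective)

end Retraction

theorem tendsto_retraction_closure_iUnion {X : Set Ordinal.{u}}
    {C : ℕ → Set Ordinal.{u}} (hC : ∀ n, IsSkeletonSet X (C n)) (hCc : ∀ n, IsClosed (C n))
    (hmono : Monotone C) (hU : IsSkeletonSet X (closure (⋃ n, C n))) (x : X) :
    Tendsto (fun n => (hC n).retraction (hCc n) x) atTop
      (𝓝 (hU.retraction isClosed_closure x)) := by
  rw [IsInducing.subtypeVal.tendsto_nhds_iff]
  have hr := fun n => (hC n).isGreatest_retraction (hCc n) x
  obtain ⟨⟨hmU, hmx⟩, hm⟩ := hU.isGreatest_retraction isClosed_closure x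
  have hmono' : Monotone fun n => ((hC n).retraction (hCc n) x).1 := fun i j hij =>
    (hr j).2 ⟨hmono hij (hr i).1.1, (hr i).1.2⟩
  refine tendsto_atTop_isLUB hmono' ⟨?_, fun b hb => ?_⟩
  · rintro _ ⟨n, rfl⟩
    exact hm ⟨subset_closure (mem_iUnion_of_mem n (hr n).1.1), (hr n).1.2⟩
  · obtain ⟨hne, hsup⟩ := ((Ordinal.mem_closure_tfae _ _).out 0 2).1 hmU
    rw [← hsup]
    refine csSup_le hne fun c ⟨hc, hcm⟩ => ?_
    obtain ⟨n, hn⟩ := mem_iUnion.1 hc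
    exact ((hr n).2 ⟨hn, mem_Iic.2 ((mem_Iic.1 hcm).trans hmx)⟩).trans (hb ⟨n, rfl⟩)

end IsSkeletonSet

theorem hasFullRetractionalSkeleton_of_cof_le {X : Set Ordinal.{u}} (hX : IsCountablyCompact X)
    (hcof : ∀ c ∈ X, c ∈ closure (X ∩ Iio c) → c.cof ≤ ℵ₀) : HasFullRetractionalSkeleton X := by
  let Γ := {C : Set Ordinal.{u} // IsSkeletonSet X C ∧ IsClosed C}
  have hext : ∀ D : Set Ordinal, D.Countable → D ⊆ X → ∃ C : Γ, D ⊆ C.1 := fun D hD hDX =>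
    let ⟨C, hC, hCc, hDC⟩ := IsSkeletonSet.exists_superset hX hcof hD hDX
    ⟨⟨C, hC, hCc⟩, hDC⟩
  have hmem : ∀ x : X, ∃ C : Γ, x.1 ∈ C.1 := fun x =>
    (hext {x.1} (countable_singleton _) (singleton_subset_iff.2 x.2)).imp fun _ h => h rfl
  refine ⟨Γ, inferInstance, fun C => C.2.1.retraction C.2.2, ?_,
    fun x => (hmem x).imp fun C hC => ⟨x, C.2.1.retraction_eq_self C.2.2 x hC⟩⟩
  exact
    { nonempty := let ⟨C, _⟩ := hext ∅ countable_empty (empty_subset _); ⟨C⟩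
      directed := fun s t => (hext _ (s.2.1.countable.union t.2.1.countable)
        (union_subset s.2.1.subset t.2.1.subset)).imp fun _ h =>
          ⟨subset_union_left.trans h, subset_union_right.trans h⟩
      continuous := fun C => C.2.1.continuous_retraction C.2.2
      retraction := fun C => funext fun x =>
        C.2.1.retraction_eq_self C.2.2 _ (C.2.1.isGreatest_retraction C.2.2 x).1.1
      compact_range := fun C => C.2.1.isCompact_range_retraction C.2.2
      metrizable_range := fun C => C.2.1.metrizableSpace_range_retraction C.2.2
      comp_eq_of_le := fun s t hst =>
        ⟨funext fun x =>
          t.2.1.retraction_eq_self t.2.2 _ (hst (s.2.1.isGreatest_retraction s.2.2 x).1.1),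
          funext (s.2.1.retraction_retraction_of_subset s.2.2 t.2.1 t.2.2 hst)⟩
      seq_sup := fun u hu => by
        have hU := (IsSkeletonSet.iUnion fun n => (u n).2.1).closure hX
        refine ⟨⟨_, hU, isClosed_closure⟩, ⟨?_, fun b hb => ?_⟩,
          IsSkeletonSet.tendsto_retraction_closure_iUnion _ _ hu hU⟩
        · rintro _ ⟨n, rfl⟩
          exact (subset_iUnion (fun n => (u n).1) n).trans subset_closure
        · exact closure_minimal (iUnion_subset fun n => hb ⟨n, rfl⟩) b.2.2
      tendsto_id := fun x =>
        let ⟨C, hC⟩ := hmem x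
        tendsto_const_nhds.congr' <| (eventually_ge_atTop C).mono fun D hD =>
          (D.2.1.retraction_eq_self D.2.2 x (hD hC)).symm }

/-- A countably compact set of ordinals admits a full retractional skeleton
iff every ordinal of uncountable cofinality in it is isolated in it. -/
theorem ncCorson_ordinals_iff_isolated
    (X : Set Ordinal.{u}) (hX : CountablyCompact ↥X) :
    HasFullRetractionalSkeleton ↥X ↔
      ∀ (α : Ordinal.{u}) (hα : α ∈ X), Cardinal.aleph0 < α.cof →
        IsOpen ({⟨α, hα⟩} : Set ↥X) := by
  have hX' : IsCountablyCompact X := isCountablyCompact_iff_countablyCompactSpace.2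
    (countablyCompact_iff_countablyCompactSpace.1 hX)
  simp only [Ordinal.isOpen_singleton_subtype_iff]
  refine ⟨fun h α hα hcof => notMem_closure_Iio_of_hasFullRetractionalSkeleton hX' h hα hcof,
    fun h => hasFullRetractionalSkeleton_of_cof_le hX' fun c hc hlim => ?_⟩
  exact not_lt.1 fun hcof => h c hc hcof hlim
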